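/- The Lie–Poisson bracket on the fiberwise-polynomial functions Γ(Symm(A)) on the dual A* of a Lie algebroid, determined by {f,g} = 0, {X,f} = ρ(X)f and {X,Y} = [X,Y] on generators and extended as a biderivation, satisfies the Jacobi identity, making Γ(Symm(A)) a Poisson algebra. -/

import Mathlib

set_option synthInstance.maxHeartbeats 1000000
set_option maxHeartbeats 1000000


/-- An algebraic model of a Lie algebroid (a Lie–Rinehart algebra): `R` plays
the role of `C^∞(M)` and `L` the role of the `R`-module of sections `Γ(A)`,
equipped with an `ℝ`-bilinear Lie bracket on `L` and an anchor
`ρ : L → Der_ℝ(R)` which is `R`-linear in `L`, such that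
`ρ [X, Y] = [ρ X, ρ Y]` and `[X, f • Y] = f • [X, Y] + (ρ X f) • Y`. -/
structure LieRinehart (R : Type) [CommRing R] [Algebra ℝ R]
    (L : Type) [AddCommGroup L] [Module R L] where
  bracket : L → L → L
  anchor : L → R → R
  bracket_add_left : ∀ X Y Z, bracket (X + Y) Z = bracket X Z + bracket Y Z
  bracket_add_right : ∀ X Y Z, bracket X (Y + Z) = bracket X Y + bracket X Z
  bracket_skew : ∀ X Y, bracket X Y = - bracket Y X
  jacobi : ∀ X Y Z,
    bracket X (bracket Y Z) = bracket (bracket X Y) Z + bracket Y (bracket X Z)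
  anchor_add_left : ∀ X Y f, anchor (X + Y) f = anchor X f + anchor Y f
  anchor_smul_left : ∀ (g : R) X f, anchor (g • X) f = g * anchor X f
  anchor_add_right : ∀ X f g, anchor X (f + g) = anchor X f + anchor X g
  anchor_real_smul : ∀ X (c : ℝ) f, anchor X (c • f) = c • anchor X f
  anchor_mul : ∀ X f g, anchor X (f * g) = anchor X f * g + f * anchor X g
  anchor_bracket : ∀ X Y f,
    anchor (bracket X Y) f = anchor X (anchor Y f) - anchor Y (anchor X f)
  leibniz : ∀ (f : R) X Y,
    bracket X (f • Y) = f • bracket X Y + (anchor X f) • Y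

variable {R : Type} [CommRing R] [Algebra ℝ R]
variable {L : Type} [AddCommGroup L] [Module R L] [Module ℝ L]
variable [IsScalarTower ℝ R L]

/-- The defining relations of `Γ(Symm(A))`, the symmetric algebra of the
`C^∞(M)`-module `Γ(A)` (the fiberwise-polynomial functions on `A*`), presented
as a quotient of the free `ℝ`-algebra on `R ⊕ L`: linearity relations, the
algebra relations of `R`, the module relation `(f X) = f · X`, and the
commutativity of all generators. -/
inductive SymRel :
    FreeAlgebra ℝ (R ⊕ L) → FreeAlgebra ℝ (R ⊕ L) → Prop
  | add_f (f g : R) : SymRel (FreeAlgebra.ι ℝ (Sum.inl (f + g)))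
      (FreeAlgebra.ι ℝ (Sum.inl f) + FreeAlgebra.ι ℝ (Sum.inl g))
  | smul_f (c : ℝ) (f : R) : SymRel (FreeAlgebra.ι ℝ (Sum.inl (c • f)))
      (c • FreeAlgebra.ι ℝ (Sum.inl f))
  | add_x (X Y : L) : SymRel (FreeAlgebra.ι ℝ (Sum.inr (X + Y)))
      (FreeAlgebra.ι ℝ (Sum.inr X) + FreeAlgebra.ι ℝ (Sum.inr Y))
  | smul_x (c : ℝ) (X : L) : SymRel (FreeAlgebra.ι ℝ (Sum.inr (c • X)))
      (c • FreeAlgebra.ι ℝ (Sum.inr X))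
  | one_f : SymRel (FreeAlgebra.ι ℝ (Sum.inl (1 : R))) 1
  | mul_f (f g : R) : SymRel (FreeAlgebra.ι ℝ (Sum.inl (f * g)))
      (FreeAlgebra.ι ℝ (Sum.inl f) * FreeAlgebra.ι ℝ (Sum.inl g))
  | smul_fx (f : R) (X : L) : SymRel (FreeAlgebra.ι ℝ (Sum.inr (f • X)))
      (FreeAlgebra.ι ℝ (Sum.inl f) * FreeAlgebra.ι ℝ (Sum.inr X))
  | comm (a b : R ⊕ L) : SymRel
      (FreeAlgebra.ι ℝ a * FreeAlgebra.ι ℝ b)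
      (FreeAlgebra.ι ℝ b * FreeAlgebra.ι ℝ a)

/-- The symmetric algebra `Γ(Symm(A))` of the module `Γ(A)`. -/
abbrev SymA (R : Type) [CommRing R] [Algebra ℝ R]
    (L : Type) [AddCommGroup L] [Module R L] [Module ℝ L]
    [IsScalarTower ℝ R L] := RingQuot (SymRel (R := R) (L := L))

/-- The canonical map `C^∞(M) → Γ(Symm(A))` (degree-0 part). -/
noncomputable def j1 (f : R) : SymA R L :=
  RingQuot.mkAlgHom ℝ SymRel (FreeAlgebra.ι ℝ (Sum.inl f))

/-- The canonical map `Γ(A) → Γ(Symm(A))` (degree-1 part). -/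
noncomputable def j2 (X : L) : SymA R L :=
  RingQuot.mkAlgHom ℝ SymRel (FreeAlgebra.ι ℝ (Sum.inr X))

-- ==== auxiliary development ====
noncomputable def Q : FreeAlgebra ℝ (R ⊕ L) →ₐ[ℝ] SymA R L := RingQuot.mkAlgHom ℝ SymRel

theorem Qrel {x y : FreeAlgebra ℝ (R ⊕ L)} (h : SymRel x y) : Q x = Q y :=
  RingQuot.mkAlgHom_rel ℝ h

theorem Qsurj (s : SymA R L) : ∃ x, Q x = s := RingQuot.mkAlgHom_surjective ℝ SymRel s

theorem j1_def (f : R) : j1 (L := L) f = Q (FreeAlgebra.ι ℝ (Sum.inl f)) := rfl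
theorem j2_def (X : L) : j2 (R := R) X = Q (FreeAlgebra.ι ℝ (Sum.inr X)) := rfl

theorem Qcomm_gen (a : R ⊕ L) (y : FreeAlgebra ℝ (R ⊕ L)) :
    Q (FreeAlgebra.ι ℝ a) * Q y = Q y * Q (FreeAlgebra.ι ℝ a) := by
  refine FreeAlgebra.induction ℝ _ ?_ ?_ ?_ ?_ y
  · intro r; rw [AlgHom.commutes]; exact (Algebra.commutes r _).symm
  · intro b
    rw [← map_mul, ← map_mul]; exact Qrel (SymRel.comm a b)
  · intro u v hu hv
    rw [map_mul, ← mul_assoc, hu, mul_assoc, hv, mul_assoc]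
  · intro u v hu hv
    rw [map_add, mul_add, add_mul, hu, hv]

theorem Qcomm (x y : FreeAlgebra ℝ (R ⊕ L)) : Q x * Q y = Q y * Q x := by
  refine FreeAlgebra.induction ℝ _ ?_ ?_ ?_ ?_ x
  · intro r; rw [AlgHom.commutes]; exact Algebra.commutes r _
  · intro a; exact Qcomm_gen a y
  · intro u v hu hv
    rw [map_mul, mul_assoc, hv, ← mul_assoc, hu, mul_assoc]
  · intro u v hu hv
    rw [map_add, mul_add, add_mul, hu, hv]

noncomputable instance : CommRing (SymA R L) :=
  { (inferInstance : Ring (SymA R L)) with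
    mul_comm := by
      intro a b
      obtain ⟨x, rfl⟩ := Qsurj a
      obtain ⟨y, rfl⟩ := Qsurj b
      exact Qcomm x y }

-- generator relations
theorem j1_add (f g : R) : j1 (L := L) (f + g) = j1 f + j1 g :=
  (Qrel (SymRel.add_f f g)).trans (map_add _ _ _)
theorem j1_smul (c : ℝ) (f : R) : j1 (L := L) (c • f) = c • j1 f :=
  (Qrel (SymRel.smul_f c f)).trans (map_smul _ _ _)
theorem j2_add (X Y : L) : j2 (R := R) (X + Y) = j2 X + j2 Y :=
  (Qrel (SymRel.add_x X Y)).trans (map_add _ _ _)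
theorem j2_smul (c : ℝ) (X : L) : j2 (R := R) (c • X) = c • j2 X :=
  (Qrel (SymRel.smul_x c X)).trans (map_smul _ _ _)
theorem j1_one : j1 (L := L) (1 : R) = 1 := (Qrel SymRel.one_f).trans (map_one _)
theorem j1_mul (f g : R) : j1 (L := L) (f * g) = j1 f * j1 g :=
  (Qrel (SymRel.mul_f f g)).trans (map_mul _ _ _)
theorem j2_Rsmul (f : R) (X : L) : j2 (f • X) = j1 (L := L) f * j2 X :=
  (Qrel (SymRel.smul_fx f X)).trans (map_mul _ _ _)

theorem j1_zero : j1 (L := L) (0 : R) = 0 := by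
  rw [← zero_smul ℝ (0 : R), j1_smul, zero_smul]
theorem j1_neg (f : R) : j1 (L := L) (-f) = - j1 f := by
  rw [← neg_one_smul ℝ f, j1_smul, neg_one_smul]
theorem j2_zero : j2 (R := R) (0 : L) = 0 := by
  rw [← zero_smul ℝ (0 : L), j2_smul, zero_smul]
theorem j2_neg (X : L) : j2 (R := R) (-X) = - j2 X := by
  rw [← neg_one_smul ℝ X, j2_smul, neg_one_smul]
theorem j1_sub (f g : R) : j1 (L := L) (f - g) = j1 f - j1 g := by
  rw [sub_eq_add_neg, j1_add, j1_neg, sub_eq_add_neg]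
theorem j2_sub (X Y : L) : j2 (R := R) (X - Y) = j2 X - j2 Y := by
  rw [sub_eq_add_neg, j2_add, j2_neg, sub_eq_add_neg]
theorem j1_algebraMap (c : ℝ) :
    j1 (L := L) (algebraMap ℝ R c) = algebraMap ℝ (SymA R L) c := by
  rw [Algebra.algebraMap_eq_smul_one, j1_smul, j1_one, Algebra.algebraMap_eq_smul_one]

-- anchor / bracket derived lemmas
section
variable (A : LieRinehart R L)

omit [Module ℝ L] [IsScalarTower ℝ R L] in
theorem anchor_one (X : L) : A.anchor X 1 = 0 := by
  have h := A.anchor_mul X 1 1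
  rw [mul_one, mul_one, one_mul] at h
  exact (left_eq_add.mp h)

omit [Module ℝ L] [IsScalarTower ℝ R L] in
theorem anchor_algebraMap (X : L) (c : ℝ) : A.anchor X (algebraMap ℝ R c) = 0 := by
  rw [Algebra.algebraMap_eq_smul_one, A.anchor_real_smul, anchor_one, smul_zero]

omit [Module ℝ L] [IsScalarTower ℝ R L] in
theorem anchor_zero (X : L) : A.anchor X (0 : R) = 0 := by
  have h := A.anchor_real_smul X 0 0
  simpa using h

omit [Module ℝ L] [IsScalarTower ℝ R L] in
theorem anchor_neg (X : L) (f : R) : A.anchor X (-f) = - A.anchor X f := by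
  rw [← neg_one_smul ℝ f, A.anchor_real_smul, neg_one_smul]

theorem bracket_real_smul_right (Z : L) (c : ℝ) (X : L) :
    A.bracket Z (c • X) = c • A.bracket Z X := by
  rw [← algebraMap_smul R c X, A.leibniz, anchor_algebraMap, zero_smul, add_zero,
    algebraMap_smul]

theorem bracket_zero_right (Z : L) : A.bracket Z 0 = 0 := by
  have h := bracket_real_smul_right A Z 0 0
  simpa using h

theorem bracket_real_smul_left (c : ℝ) (X Z : L) :
    A.bracket (c • X) Z = c • A.bracket X Z := by
  rw [A.bracket_skew, bracket_real_smul_right, A.bracket_skew X Z, smul_neg]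

omit [Module ℝ L] [IsScalarTower ℝ R L] in
theorem bracket_smul_left (f : R) (X Z : L) :
    A.bracket (f • X) Z = f • A.bracket X Z - A.anchor Z f • X := by
  rw [A.bracket_skew, A.leibniz, A.bracket_skew Z X, neg_add, smul_neg, neg_neg,
    sub_eq_add_neg]

end

-- the bracket on generators
noncomputable def br (A : LieRinehart R L) : (R ⊕ L) → (R ⊕ L) → SymA R L
  | Sum.inl _, Sum.inl _ => 0
  | Sum.inr X, Sum.inl f => j1 (A.anchor X f)
  | Sum.inl f, Sum.inr Y => - j1 (A.anchor Y f)
  | Sum.inr X, Sum.inr Y => j2 (A.bracket X Y)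

section BrIdent
variable (A : LieRinehart R L)

theorem br_skew (a b : R ⊕ L) : br A a b = - br A b a := by
  rcases a with f | X <;> rcases b with g | Y
  · simp [br]
  · simp [br]
  · simp [br]
  · show j2 (A.bracket X Y) = - j2 (A.bracket Y X)
    rw [A.bracket_skew X Y, j2_neg]

theorem br_add_f (g : R ⊕ L) (f f' : R) :
    br A g (Sum.inl (f + f')) = br A g (Sum.inl f) + br A g (Sum.inl f') := by
  rcases g with h | X
  · simp [br]
  · show j1 (A.anchor X (f + f')) = _
    rw [A.anchor_add_right, j1_add]; rfl

theorem br_smul_f (g : R ⊕ L) (c : ℝ) (f : R) :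
    br A g (Sum.inl (c • f)) = c • br A g (Sum.inl f) := by
  rcases g with h | X
  · simp [br]
  · show j1 (A.anchor X (c • f)) = _
    rw [A.anchor_real_smul, j1_smul]; rfl

theorem br_add_x (g : R ⊕ L) (X Y : L) :
    br A g (Sum.inr (X + Y)) = br A g (Sum.inr X) + br A g (Sum.inr Y) := by
  rcases g with h | Z
  · show -j1 (A.anchor (X + Y) h) = -j1 (A.anchor X h) + -j1 (A.anchor Y h)
    rw [A.anchor_add_left, j1_add]; abel
  · show j2 (A.bracket Z (X + Y)) = _
    rw [A.bracket_add_right, j2_add]; rfl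

theorem br_smul_x (g : R ⊕ L) (c : ℝ) (X : L) :
    br A g (Sum.inr (c • X)) = c • br A g (Sum.inr X) := by
  rcases g with h | Z
  · show -j1 (A.anchor (c • X) h) = c • -j1 (A.anchor X h)
    rw [← algebraMap_smul R c X, A.anchor_smul_left, j1_mul, j1_algebraMap,
      smul_neg, Algebra.smul_def]
  · show j2 (A.bracket Z (c • X)) = _
    rw [bracket_real_smul_right, j2_smul]; rfl

theorem br_one_f (g : R ⊕ L) : br A g (Sum.inl (1 : R)) = 0 := by
  rcases g with h | X
  · simp [br]
  · show j1 (A.anchor X 1) = 0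
    rw [anchor_one, j1_zero]

theorem br_mul_f (g : R ⊕ L) (f f' : R) :
    br A g (Sum.inl (f * f')) =
      j1 f * br A g (Sum.inl f') + br A g (Sum.inl f) * j1 f' := by
  rcases g with h | X
  · simp [br]
  · show j1 (A.anchor X (f * f')) = j1 f * j1 (A.anchor X f') + j1 (A.anchor X f) * j1 f'
    rw [A.anchor_mul, j1_add, j1_mul, j1_mul]; ring

theorem br_smul_fx (g : R ⊕ L) (f : R) (X : L) :
    br A g (Sum.inr (f • X)) =
      j1 f * br A g (Sum.inr X) + br A g (Sum.inl f) * j2 X := by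
  rcases g with h | Z
  · show -j1 (A.anchor (f • X) h) = j1 f * -j1 (A.anchor X h) + 0 * j2 X
    rw [A.anchor_smul_left, j1_mul]; ring
  · show j2 (A.bracket Z (f • X)) = j1 f * j2 (A.bracket Z X) + j1 (A.anchor Z f) * j2 X
    rw [A.leibniz, j2_add, j2_Rsmul, j2_Rsmul]
end BrIdent

-- ===== Stage A: for each generator g, a derivation of SymA =====
section StageA
variable (A : LieRinehart R L)

noncomputable def psi (g : R ⊕ L) :
    FreeAlgebra ℝ (R ⊕ L) →ₐ[ℝ] TrivSqZeroExt (SymA R L) (SymA R L) :=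
  FreeAlgebra.lift ℝ fun a =>
    TrivSqZeroExt.inl (Q (FreeAlgebra.ι ℝ a)) + TrivSqZeroExt.inr (br A g a)

theorem psi_ι (g a : R ⊕ L) :
    psi A g (FreeAlgebra.ι ℝ a)
      = TrivSqZeroExt.inl (Q (FreeAlgebra.ι ℝ a)) + TrivSqZeroExt.inr (br A g a) := by
  simp [psi]

theorem psi_ι_fst (g a : R ⊕ L) : (psi A g (FreeAlgebra.ι ℝ a)).fst = Q (FreeAlgebra.ι ℝ a) := by
  simp [psi_ι]

theorem psi_ι_snd (g a : R ⊕ L) : (psi A g (FreeAlgebra.ι ℝ a)).snd = br A g a := by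
  simp [psi_ι]

theorem psi_fst (g : R ⊕ L) (x : FreeAlgebra ℝ (R ⊕ L)) : (psi A g x).fst = Q x := by
  refine FreeAlgebra.induction ℝ _ ?_ ?_ ?_ ?_ x
  · intro r
    rw [AlgHom.commutes, AlgHom.commutes]
    rw [show (algebraMap ℝ (TrivSqZeroExt (SymA R L) (SymA R L))) r
        = TrivSqZeroExt.inl (algebraMap ℝ (SymA R L) r) from rfl, TrivSqZeroExt.fst_inl]
  · intro a; exact psi_ι_fst A g a
  · intro u v hu hv; rw [map_mul, map_mul, TrivSqZeroExt.fst_mul, hu, hv]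
  · intro u v hu hv; rw [map_add, map_add, TrivSqZeroExt.fst_add, hu, hv]

theorem psi_rel (g : R ⊕ L) :
    ∀ ⦃x y : FreeAlgebra ℝ (R ⊕ L)⦄, SymRel x y → psi A g x = psi A g y := by
  intro x y h
  refine TrivSqZeroExt.ext ?_ ?_
  · rw [psi_fst, psi_fst]; exact Qrel h
  · induction h with
  | add_f f f' => rw [map_add, TrivSqZeroExt.snd_add, psi_ι_snd, psi_ι_snd, psi_ι_snd,
      br_add_f]
  | smul_f c f => rw [map_smul, TrivSqZeroExt.snd_smul, psi_ι_snd, psi_ι_snd, br_smul_f]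
  | add_x X Y => rw [map_add, TrivSqZeroExt.snd_add, psi_ι_snd, psi_ι_snd, psi_ι_snd,
      br_add_x]
  | smul_x c X => rw [map_smul, TrivSqZeroExt.snd_smul, psi_ι_snd, psi_ι_snd, br_smul_x]
  | one_f => rw [map_one, TrivSqZeroExt.snd_one, psi_ι_snd, br_one_f]
  | mul_f f f' =>
      rw [map_mul, TrivSqZeroExt.snd_mul, psi_ι_snd, psi_ι_snd, psi_ι_snd,
        psi_ι_fst, psi_ι_fst, br_mul_f]
      simp only [MulOpposite.smul_eq_mul_unop, MulOpposite.unop_op, smul_eq_mul]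
      rw [← j1_def, ← j1_def]
  | smul_fx f X =>
      rw [map_mul, TrivSqZeroExt.snd_mul, psi_ι_snd, psi_ι_snd, psi_ι_snd,
        psi_ι_fst, psi_ι_fst, br_smul_fx]
      simp only [MulOpposite.smul_eq_mul_unop, MulOpposite.unop_op, smul_eq_mul]
      rw [← j1_def, ← j2_def]
  | comm a b =>
      rw [map_mul, map_mul, TrivSqZeroExt.snd_mul, TrivSqZeroExt.snd_mul,
        psi_ι_snd, psi_ι_snd, psi_ι_fst, psi_ι_fst]
      simp only [MulOpposite.smul_eq_mul_unop, MulOpposite.unop_op, smul_eq_mul]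
      ring

noncomputable def psibar (g : R ⊕ L) :
    SymA R L →ₐ[ℝ] TrivSqZeroExt (SymA R L) (SymA R L) :=
  RingQuot.liftAlgHom ℝ ⟨psi A g, psi_rel A g⟩

theorem psibar_Q (g : R ⊕ L) (x : FreeAlgebra ℝ (R ⊕ L)) :
    psibar A g (Q x) = psi A g x :=
  RingQuot.liftAlgHom_mkAlgHom_apply ℝ (psi A g) (psi_rel A g) x

theorem psibar_fst (g : R ⊕ L) (s : SymA R L) : (psibar A g s).fst = s := by
  obtain ⟨x, rfl⟩ := Qsurj s
  rw [psibar_Q, psi_fst]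

noncomputable def Dlin (g : R ⊕ L) : SymA R L →ₗ[ℝ] SymA R L where
  toFun s := (psibar A g s).snd
  map_add' x y := by rw [map_add, TrivSqZeroExt.snd_add]
  map_smul' c x := by rw [map_smul, TrivSqZeroExt.snd_smul]; rfl

theorem Dlin_gen (g a : R ⊕ L) : Dlin A g (Q (FreeAlgebra.ι ℝ a)) = br A g a := by
  show (psibar A g (Q (FreeAlgebra.ι ℝ a))).snd = _
  rw [psibar_Q, psi_ι_snd]

theorem Dlin_der (g : R ⊕ L) (x y : SymA R L) :
    Dlin A g (x * y) = Dlin A g x * y + x * Dlin A g y := by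
  show (psibar A g (x * y)).snd = (psibar A g x).snd * y + x * (psibar A g y).snd
  rw [map_mul, TrivSqZeroExt.snd_mul, psibar_fst, psibar_fst]
  simp only [MulOpposite.smul_eq_mul_unop, MulOpposite.unop_op, smul_eq_mul]
  ring

end StageA

-- ===== derivations: extensionality =====
def IsDer (T : SymA R L →ₗ[ℝ] SymA R L) : Prop :=
  ∀ x y, T (x * y) = T x * y + x * T y

section Der
variable (A : LieRinehart R L)

theorem isDer_Dlin (g : R ⊕ L) : IsDer (Dlin A g) := Dlin_der A g

theorem isDer_zero : IsDer (0 : SymA R L →ₗ[ℝ] SymA R L) := by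
  intro x y; simp

theorem isDer_add {T T' : SymA R L →ₗ[ℝ] SymA R L} (h : IsDer T) (h' : IsDer T') :
    IsDer (T + T') := by
  intro x y; simp [h x y, h' x y]; ring

theorem isDer_rsmul (c : ℝ) {T : SymA R L →ₗ[ℝ] SymA R L} (h : IsDer T) :
    IsDer (c • T) := by
  intro x y; simp [h x y, smul_add, mul_smul_comm, smul_mul_assoc]

theorem isDer_smul (a : SymA R L) {T : SymA R L →ₗ[ℝ] SymA R L} (h : IsDer T) :
    IsDer (a • T) := by
  intro x y
  simp only [LinearMap.smul_apply, smul_eq_mul, h x y]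
  ring

theorem der_one {T : SymA R L →ₗ[ℝ] SymA R L} (h : IsDer T) : T 1 = 0 := by
  have := h 1 1
  simp only [mul_one, one_mul] at this
  exact (left_eq_add.mp this)

theorem der_algebraMap {T : SymA R L →ₗ[ℝ] SymA R L} (h : IsDer T) (r : ℝ) :
    T (algebraMap ℝ (SymA R L) r) = 0 := by
  rw [Algebra.algebraMap_eq_smul_one, map_smul, der_one h, smul_zero]

theorem der_ext {T T' : SymA R L →ₗ[ℝ] SymA R L} (hT : IsDer T) (hT' : IsDer T')
    (h : ∀ a, T (Q (FreeAlgebra.ι ℝ a)) = T' (Q (FreeAlgebra.ι ℝ a))) : T = T' := by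
  apply LinearMap.ext
  intro s
  obtain ⟨x, rfl⟩ := Qsurj s
  refine FreeAlgebra.induction ℝ _ ?_ ?_ ?_ ?_ x
  · intro r; rw [AlgHom.commutes, der_algebraMap hT, der_algebraMap hT']
  · exact h
  · intro u v hu hv; rw [map_mul, hT, hT', hu, hv]
  · intro u v hu hv; rw [map_add, map_add, map_add, hu, hv]

-- ===== Stage B =====
noncomputable def Psi :
    FreeAlgebra ℝ (R ⊕ L) →ₐ[ℝ] TrivSqZeroExt (SymA R L) (SymA R L →ₗ[ℝ] SymA R L) :=
  FreeAlgebra.lift ℝ fun a =>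
    TrivSqZeroExt.inl (Q (FreeAlgebra.ι ℝ a)) + TrivSqZeroExt.inr (Dlin A a)

theorem Psi_ι_fst (a : R ⊕ L) : (Psi A (FreeAlgebra.ι ℝ a)).fst = Q (FreeAlgebra.ι ℝ a) := by
  simp [Psi]

theorem Psi_ι_snd (a : R ⊕ L) : (Psi A (FreeAlgebra.ι ℝ a)).snd = Dlin A a := by
  simp [Psi]

theorem Psi_fst (x : FreeAlgebra ℝ (R ⊕ L)) : (Psi A x).fst = Q x := by
  refine FreeAlgebra.induction ℝ _ ?_ ?_ ?_ ?_ x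
  · intro r
    rw [AlgHom.commutes, AlgHom.commutes]
    rw [show (algebraMap ℝ (TrivSqZeroExt (SymA R L) (SymA R L →ₗ[ℝ] SymA R L))) r
        = TrivSqZeroExt.inl (algebraMap ℝ (SymA R L) r) from rfl, TrivSqZeroExt.fst_inl]
  · intro a; exact Psi_ι_fst A a
  · intro u v hu hv; rw [map_mul, map_mul, TrivSqZeroExt.fst_mul, hu, hv]
  · intro u v hu hv; rw [map_add, map_add, TrivSqZeroExt.fst_add, hu, hv]

-- first-slot values of br via skew
theorem br1_add_f (f f' : R) (a : R ⊕ L) :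
    br A (Sum.inl (f + f')) a = br A (Sum.inl f) a + br A (Sum.inl f') a := by
  rw [br_skew, br_add_f, neg_add, ← br_skew, ← br_skew]

theorem br1_smul_f (c : ℝ) (f : R) (a : R ⊕ L) :
    br A (Sum.inl (c • f)) a = c • br A (Sum.inl f) a := by
  rw [br_skew, br_smul_f, ← smul_neg, ← br_skew]

theorem br1_add_x (X Y : L) (a : R ⊕ L) :
    br A (Sum.inr (X + Y)) a = br A (Sum.inr X) a + br A (Sum.inr Y) a := by
  rw [br_skew, br_add_x, neg_add, ← br_skew, ← br_skew]

theorem br1_smul_x (c : ℝ) (X : L) (a : R ⊕ L) :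
    br A (Sum.inr (c • X)) a = c • br A (Sum.inr X) a := by
  rw [br_skew, br_smul_x, ← smul_neg, ← br_skew]

theorem br1_one_f (a : R ⊕ L) : br A (Sum.inl (1 : R)) a = 0 := by
  rw [br_skew, br_one_f, neg_zero]

theorem br1_mul_f (f f' : R) (a : R ⊕ L) :
    br A (Sum.inl (f * f')) a
      = j1 f * br A (Sum.inl f') a + br A (Sum.inl f) a * j1 f' := by
  rw [br_skew, br_mul_f, neg_add, ← mul_neg, ← br_skew, ← neg_mul, ← br_skew]

theorem br1_smul_fx (f : R) (X : L) (a : R ⊕ L) :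
    br A (Sum.inr (f • X)) a
      = j1 f * br A (Sum.inr X) a + br A (Sum.inl f) a * j2 X := by
  rw [br_skew, br_smul_fx, neg_add, ← mul_neg, ← br_skew, ← neg_mul, ← br_skew]

theorem Psi_rel : ∀ ⦃x y : FreeAlgebra ℝ (R ⊕ L)⦄, SymRel x y → Psi A x = Psi A y := by
  intro x y h
  refine TrivSqZeroExt.ext ?_ ?_
  · rw [Psi_fst, Psi_fst]; exact Qrel h
  · induction h with
  | add_f f f' =>
      rw [map_add, TrivSqZeroExt.snd_add, Psi_ι_snd, Psi_ι_snd, Psi_ι_snd]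
      refine der_ext (isDer_Dlin A _) (isDer_add (isDer_Dlin A _) (isDer_Dlin A _)) ?_
      intro a
      rw [LinearMap.add_apply, Dlin_gen, Dlin_gen, Dlin_gen, br1_add_f]
  | smul_f c f =>
      rw [map_smul, TrivSqZeroExt.snd_smul, Psi_ι_snd, Psi_ι_snd]
      refine der_ext (isDer_Dlin A _) (isDer_rsmul c (isDer_Dlin A _)) ?_
      intro a
      rw [LinearMap.smul_apply, Dlin_gen, Dlin_gen, br1_smul_f]
  | add_x X Y =>
      rw [map_add, TrivSqZeroExt.snd_add, Psi_ι_snd, Psi_ι_snd, Psi_ι_snd]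
      refine der_ext (isDer_Dlin A _) (isDer_add (isDer_Dlin A _) (isDer_Dlin A _)) ?_
      intro a
      rw [LinearMap.add_apply, Dlin_gen, Dlin_gen, Dlin_gen, br1_add_x]
  | smul_x c X =>
      rw [map_smul, TrivSqZeroExt.snd_smul, Psi_ι_snd, Psi_ι_snd]
      refine der_ext (isDer_Dlin A _) (isDer_rsmul c (isDer_Dlin A _)) ?_
      intro a
      rw [LinearMap.smul_apply, Dlin_gen, Dlin_gen, br1_smul_x]
  | one_f =>
      rw [map_one, TrivSqZeroExt.snd_one, Psi_ι_snd]
      refine der_ext (isDer_Dlin A _) (isDer_zero) ?_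
      intro a
      rw [LinearMap.zero_apply, Dlin_gen, br1_one_f]
  | mul_f f f' =>
      rw [map_mul, TrivSqZeroExt.snd_mul, Psi_ι_snd, Psi_ι_snd, Psi_ι_snd,
        Psi_ι_fst, Psi_ι_fst, op_smul_eq_smul]
      refine der_ext (isDer_Dlin A _)
        (isDer_add (isDer_smul _ (isDer_Dlin A _)) (isDer_smul _ (isDer_Dlin A _))) ?_
      intro a
      rw [LinearMap.add_apply, LinearMap.smul_apply, LinearMap.smul_apply,
        Dlin_gen, Dlin_gen, Dlin_gen, smul_eq_mul, smul_eq_mul, br1_mul_f, ← j1_def, ← j1_def]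
      ring
  | smul_fx f X =>
      rw [map_mul, TrivSqZeroExt.snd_mul, Psi_ι_snd, Psi_ι_snd, Psi_ι_snd,
        Psi_ι_fst, Psi_ι_fst, op_smul_eq_smul]
      refine der_ext (isDer_Dlin A _)
        (isDer_add (isDer_smul _ (isDer_Dlin A _)) (isDer_smul _ (isDer_Dlin A _))) ?_
      intro a
      rw [LinearMap.add_apply, LinearMap.smul_apply, LinearMap.smul_apply,
        Dlin_gen, Dlin_gen, Dlin_gen, smul_eq_mul, smul_eq_mul, br1_smul_fx,
        ← j1_def, ← j2_def]
      ring
  | comm a b =>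
      rw [map_mul, map_mul, TrivSqZeroExt.snd_mul, TrivSqZeroExt.snd_mul,
        Psi_ι_snd, Psi_ι_snd, Psi_ι_fst, Psi_ι_fst,
        op_smul_eq_smul, op_smul_eq_smul]
      exact add_comm _ _

noncomputable def Psibar :
    SymA R L →ₐ[ℝ] TrivSqZeroExt (SymA R L) (SymA R L →ₗ[ℝ] SymA R L) :=
  RingQuot.liftAlgHom ℝ ⟨Psi A, Psi_rel A⟩

theorem Psibar_Q (x : FreeAlgebra ℝ (R ⊕ L)) : Psibar A (Q x) = Psi A x :=
  RingQuot.liftAlgHom_mkAlgHom_apply ℝ (Psi A) (Psi_rel A) x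

theorem Psibar_fst (s : SymA R L) : (Psibar A s).fst = s := by
  obtain ⟨x, rfl⟩ := Qsurj s
  rw [Psibar_Q, Psi_fst]

noncomputable def P (a b : SymA R L) : SymA R L := (Psibar A a).snd b

end Der

-- ===== properties of P =====
section Pprops
variable (A : LieRinehart R L)

theorem P_Q (x : FreeAlgebra ℝ (R ⊕ L)) (b : SymA R L) :
    P A (Q x) b = (Psi A x).snd b := by rw [P, Psibar_Q]

theorem P_gen (a b : R ⊕ L) :
    P A (Q (FreeAlgebra.ι ℝ a)) (Q (FreeAlgebra.ι ℝ b)) = br A a b := by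
  rw [P_Q, Psi_ι_snd, Dlin_gen]

theorem P_add1 (a a' b : SymA R L) : P A (a + a') b = P A a b + P A a' b := by
  rw [P, P, P, map_add, TrivSqZeroExt.snd_add, LinearMap.add_apply]

theorem P_add2 (a b b' : SymA R L) : P A a (b + b') = P A a b + P A a b' :=
  map_add _ _ _

theorem P_smul2 (a : SymA R L) (c : ℝ) (b : SymA R L) : P A a (c • b) = c • P A a b :=
  map_smul _ _ _

theorem P_zero2 (a : SymA R L) : P A a 0 = 0 := map_zero _

theorem P_neg2 (a b : SymA R L) : P A a (-b) = - P A a b := map_neg _ _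

theorem P_mul1 (a a' b : SymA R L) :
    P A (a * a') b = a * P A a' b + a' * P A a b := by
  rw [P, P, P, map_mul, TrivSqZeroExt.snd_mul, Psibar_fst, Psibar_fst, op_smul_eq_smul,
    LinearMap.add_apply, LinearMap.smul_apply, LinearMap.smul_apply, smul_eq_mul,
    smul_eq_mul]

theorem P_alg1 (r : ℝ) (b : SymA R L) : P A (algebraMap ℝ (SymA R L) r) b = 0 := by
  rw [P, AlgHom.commutes,
    show (algebraMap ℝ (TrivSqZeroExt (SymA R L) (SymA R L →ₗ[ℝ] SymA R L))) r
      = TrivSqZeroExt.inl (algebraMap ℝ (SymA R L) r) from rfl,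
    TrivSqZeroExt.snd_inl, LinearMap.zero_apply]

theorem P_mul2 (a x y : SymA R L) :
    P A a (x * y) = P A a x * y + x * P A a y := by
  obtain ⟨u, rfl⟩ := Qsurj a
  refine FreeAlgebra.induction ℝ _ ?_ ?_ ?_ ?_ u
  · intro r; rw [AlgHom.commutes, P_alg1, P_alg1, P_alg1]; ring
  · intro g
    have h : ∀ b, P A (Q (FreeAlgebra.ι ℝ g)) b = Dlin A g b := by
      intro b; rw [P_Q, Psi_ι_snd]
    rw [h, h, h, Dlin_der]
  · intro u v hu hv
    rw [map_mul, P_mul1, P_mul1, P_mul1, hu, hv]; ring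
  · intro u v hu hv
    rw [map_add, P_add1, P_add1, P_add1, hu, hv]; ring

theorem P_one2 (a : SymA R L) : P A a 1 = 0 := by
  have h := P_mul2 A a 1 1
  simp only [mul_one, one_mul] at h
  exact left_eq_add.mp h

theorem P_alg2 (a : SymA R L) (r : ℝ) : P A a (algebraMap ℝ (SymA R L) r) = 0 := by
  rw [Algebra.algebraMap_eq_smul_one, P_smul2, P_one2, smul_zero]

theorem P_skew_gen (a : R ⊕ L) (y : FreeAlgebra ℝ (R ⊕ L)) :
    P A (Q (FreeAlgebra.ι ℝ a)) (Q y) = - P A (Q y) (Q (FreeAlgebra.ι ℝ a)) := by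
  refine FreeAlgebra.induction ℝ _ ?_ ?_ ?_ ?_ y
  · intro r; rw [AlgHom.commutes, P_alg2, P_alg1, neg_zero]
  · intro b; rw [P_gen, P_gen, br_skew]
  · intro u v hu hv
    rw [map_mul, P_mul2, P_mul1, hu, hv]; ring
  · intro u v hu hv
    rw [map_add, P_add2, P_add1, hu, hv]; ring

theorem P_skew (a b : SymA R L) : P A a b = - P A b a := by
  obtain ⟨x, rfl⟩ := Qsurj a
  obtain ⟨y, rfl⟩ := Qsurj b
  refine FreeAlgebra.induction ℝ _ ?_ ?_ ?_ ?_ x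
  · intro r; rw [AlgHom.commutes, P_alg1, P_alg2, neg_zero]
  · intro g; exact P_skew_gen A g y
  · intro u v hu hv
    rw [map_mul, P_mul1, P_mul2, hu, hv]; ring
  · intro u v hu hv
    rw [map_add, P_add1, P_add2, hu, hv]; ring

theorem P11 (f g : R) : P A (j1 f) (j1 g) = 0 := by
  rw [j1_def, j1_def, P_gen]; rfl
theorem P21 (X : L) (f : R) : P A (j2 X) (j1 f) = j1 (A.anchor X f) := by
  rw [j2_def, j1_def, P_gen]; rfl
theorem P12 (f : R) (Y : L) : P A (j1 f) (j2 Y) = - j1 (A.anchor Y f) := by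
  rw [j1_def, j2_def, P_gen]; rfl
theorem P22 (X Y : L) : P A (j2 X) (j2 Y) = j2 (A.bracket X Y) := by
  rw [j2_def, j2_def, P_gen]; rfl

-- the cyclic Jacobiator
noncomputable def K (a b c : SymA R L) : SymA R L :=
  P A a (P A b c) + P A b (P A c a) + P A c (P A a b)

theorem K_cyc (a b c : SymA R L) : K A a b c = K A b c a := by
  simp only [K]; ring

theorem K_add3 (a b c c' : SymA R L) :
    K A a b (c + c') = K A a b c + K A a b c' := by
  simp only [K, P_add1, P_add2]; ring

theorem K_add1 (a a' b c : SymA R L) :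
    K A (a + a') b c = K A a b c + K A a' b c := by
  rw [K_cyc A (a + a') b c, K_add3, ← K_cyc A a b c, ← K_cyc A a' b c]

theorem K_add2 (a b b' c : SymA R L) :
    K A a (b + b') c = K A a b c + K A a b' c := by
  rw [K_cyc A a (b + b') c, K_cyc A (b + b') c a, K_add3,
    ← K_cyc A b c a, ← K_cyc A a b c, ← K_cyc A b' c a, ← K_cyc A a b' c]

theorem K_alg3 (a b : SymA R L) (r : ℝ) :
    K A a b (algebraMap ℝ (SymA R L) r) = 0 := by
  simp only [K, P_alg1, P_alg2, P_zero2, add_zero, zero_add]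

theorem K_alg1 (b c : SymA R L) (r : ℝ) :
    K A (algebraMap ℝ (SymA R L) r) b c = 0 := by
  rw [K_cyc]; exact K_alg3 A b c r

theorem K_alg2 (a c : SymA R L) (r : ℝ) :
    K A a (algebraMap ℝ (SymA R L) r) c = 0 := by
  rw [K_cyc]; exact K_alg1 A c a r

theorem K_leib3 (a b c c' : SymA R L) :
    K A a b (c * c') = c * K A a b c' + c' * K A a b c := by
  simp only [K, P_mul1, P_mul2, P_add2]
  linear_combination (P A b c) * P_skew A a c' + (P A b c') * P_skew A a c

theorem K_leib1 (a a' b c : SymA R L) :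
    K A (a * a') b c = a * K A a' b c + a' * K A a b c := by
  rw [K_cyc A (a * a') b c, K_leib3, ← K_cyc A a' b c, ← K_cyc A a b c]

theorem K_leib2 (a b b' c : SymA R L) :
    K A a (b * b') c = b * K A a b' c + b' * K A a b c := by
  rw [K_cyc A a (b * b') c, K_cyc A (b * b') c a, K_leib3,
    ← K_cyc A b' c a, ← K_cyc A a b' c, ← K_cyc A b c a, ← K_cyc A a b c]

theorem bracket_neg_right (Y W : L) : A.bracket Y (-W) = - A.bracket Y W := by
  rw [← neg_one_smul ℝ W, bracket_real_smul_right, neg_one_smul]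

theorem K_gen (a b c : R ⊕ L) :
    K A (Q (FreeAlgebra.ι ℝ a)) (Q (FreeAlgebra.ι ℝ b)) (Q (FreeAlgebra.ι ℝ c)) = 0 := by
  rcases a with f | X <;> rcases b with g | Y <;> rcases c with h | Z <;>
    simp only [K, ← j1_def, ← j2_def]
  · rw [P11 A g h, P_zero2, P11 A h f, P_zero2, P11 A f g, P_zero2]; ring
  · rw [P12 A g Z, P_neg2, P11, P21 A Z f, P11, P11 A f g, P_zero2]; simp
  · rw [P21 A Y h, P11, P11 A h f, P_zero2, P12 A f Y, P_neg2, P11]; simp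
  · rw [P22 A Y Z, P12 A f (A.bracket Y Z), P21 A Z f, P21 A Y (A.anchor Z f),
      P12 A f Y, P_neg2, P21 A Z (A.anchor Y f), A.anchor_bracket Y Z f, j1_sub]
    abel
  · rw [P11 A g h, P_zero2, P12 A h X, P_neg2, P11, P21 A X g, P11]; simp
  · rw [P12 A g Z, P_neg2, P21 A X (A.anchor Z g), P22 A Z X,
      P12 A g (A.bracket Z X), P21 A X g, P21 A Z (A.anchor X g),
      A.anchor_bracket Z X g, j1_sub]
    abel
  · rw [P21 A Y h, P21 A X (A.anchor Y h), P12 A h X, P_neg2, P21 A Y (A.anchor X h),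
      P22 A X Y, P12 A h (A.bracket X Y), A.anchor_bracket X Y h, j1_sub]
    abel
  · rw [P22 A Y Z, P22 A X (A.bracket Y Z), P22 A Z X, P22 A Y (A.bracket Z X),
      P22 A X Y, P22 A Z (A.bracket X Y)]
    have hzero : A.bracket X (A.bracket Y Z) + A.bracket Y (A.bracket Z X)
        + A.bracket Z (A.bracket X Y) = 0 := by
      rw [A.jacobi X Y Z, A.bracket_skew Z X, bracket_neg_right,
        A.bracket_skew (A.bracket X Y) Z]
      abel
    rw [← j2_add, ← j2_add, hzero, j2_zero]

theorem K_gen3 (a b : R ⊕ L) (z : FreeAlgebra ℝ (R ⊕ L)) :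
    K A (Q (FreeAlgebra.ι ℝ a)) (Q (FreeAlgebra.ι ℝ b)) (Q z) = 0 := by
  refine FreeAlgebra.induction ℝ _ ?_ ?_ ?_ ?_ z
  · intro r; rw [AlgHom.commutes]; exact K_alg3 A _ _ r
  · intro c; exact K_gen A a b c
  · intro u v hu hv; rw [map_mul, K_leib3, hu, hv]; ring
  · intro u v hu hv; rw [map_add, K_add3, hu, hv]; ring

theorem K_gen2 (a : R ⊕ L) (y z : FreeAlgebra ℝ (R ⊕ L)) :
    K A (Q (FreeAlgebra.ι ℝ a)) (Q y) (Q z) = 0 := by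
  refine FreeAlgebra.induction ℝ _ ?_ ?_ ?_ ?_ y
  · intro r; rw [AlgHom.commutes]; exact K_alg2 A _ _ r
  · intro b; exact K_gen3 A a b z
  · intro u v hu hv; rw [map_mul, K_leib2, hu, hv]; ring
  · intro u v hu hv; rw [map_add, K_add2, hu, hv]; ring

theorem K_zero (a b c : SymA R L) : K A a b c = 0 := by
  obtain ⟨x, rfl⟩ := Qsurj a
  obtain ⟨y, rfl⟩ := Qsurj b
  obtain ⟨z, rfl⟩ := Qsurj c
  refine FreeAlgebra.induction ℝ _ ?_ ?_ ?_ ?_ x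
  · intro r; rw [AlgHom.commutes]; exact K_alg1 A _ _ r
  · intro a; exact K_gen2 A a y z
  · intro u v hu hv; rw [map_mul, K_leib1, hu, hv]; ring
  · intro u v hu hv; rw [map_add, K_add1, hu, hv]; ring

end Pprops


/-- the Lie–Poisson bracket on the fiberwise-polynomial functions
`Γ(Symm(A))` on `A*`, determined on generators by `{f, g} = 0`,
`{X, f} = ρ(X) f` and `{X, Y} = [X, Y]` and extended as a skew biderivation,
satisfies the Jacobi identity, making `Γ(Symm(A))` a Poisson algebra. -/
theorem symAlg_lie_poisson (A : LieRinehart R L) :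
    ∃ P : SymA R L → SymA R L → SymA R L,
      (∀ a b c, P (a + b) c = P a c + P b c) ∧
      (∀ a b, P a b = - P b a) ∧
      (∀ a b c, P a (b * c) = P a b * c + b * P a c) ∧
      (∀ f g : R, P (j1 f) (j1 g) = 0) ∧
      (∀ (X : L) (f : R), P (j2 X) (j1 f) = j1 (A.anchor X f)) ∧
      (∀ X Y : L, P (j2 X) (j2 Y) = j2 (A.bracket X Y)) ∧
      (∀ a b c, P a (P b c) = P (P a b) c + P b (P a c)) := by
  refine ⟨P A, P_add1 A, P_skew A, P_mul2 A, P11 A, P21 A, P22 A, ?_⟩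
  intro a b c
  have hK := K_zero A a b c
  simp only [K] at hK
  rw [P_skew A (P A a b) c,
    show P A b (P A a c) = - P A b (P A c a) by rw [P_skew A a c, P_neg2]]
  linear_combination hK
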